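/- Let ν be a rotationally invariant measure on ℝ^d with density q, let c ∈ ℝ^d be nonzero, and let R = I - 2cc^T/|c|^2. Then for every z ∈ ℝ^d and m > 0, the integral ∫_{|v|≤m} (e^{i⟨z,Rv⟩}(e^{i⟨z,c+v-Rv⟩} - 1) - i⟨z, c+v-Rv⟩) · (q(v) ∧ q(v+c)𝟙_{|v+c|≤m}) dv equals zero, provided the integrand is integrable. -/

import Mathlib

open MeasureTheory Complex
open scoped RealInnerProductSpace

/-! The affine map `T v = R v - c` is a measure-preserving involution with `T v = R (v + c)` and
`T v + c = R v`. By rotational invariance of `q` it therefore swaps the two factors of the weight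
`min (q(v)𝟙_{|v|≤m}) (q(v+c)𝟙_{|v+c|≤m})`, which (as `q ≥ 0`) is the given weight on `|v| ≤ m`
and vanishes off it; and since `R (T v) = v + c` it changes the sign of the phase factor. The
integrand extended by zero is thus odd under `T`, so its integral is zero. -/

/-- The reflection `R = I - 2cc^T/|c|²`. -/
noncomputable def reflectC {d : ℕ} (c v : EuclideanSpace ℝ (Fin d)) :
    EuclideanSpace ℝ (Fin d) :=
  v - ((2 * ⟪c, v⟫) / ‖c‖ ^ 2) • c

section AntisymmetricIntegral

variable {E F : Type*} [NormedAddCommGroup E] [InnerProductSpace ℝ E] [FiniteDimensional ℝ E]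
  [MeasurableSpace E] [BorelSpace E] [NormedAddCommGroup F] [NormedSpace ℝ F]

theorem integral_comp_linearIsometryEquiv_sub (R : E ≃ₗᵢ[ℝ] E) (c : E) (G : E → F) :
    ∫ v, G (R v - c) = ∫ v, G v := by
  rw [R.measurePreserving.integral_comp R.toHomeomorph.measurableEmbedding (fun u => G (u - c)),
    integral_sub_right_eq_self]

theorem integral_eq_zero_of_comp_linearIsometryEquiv_sub_eq_neg (R : E ≃ₗᵢ[ℝ] E) (c : E)
    {G : E → F} (hG : ∀ v, G (R v - c) = -G v) : ∫ v, G v = 0 := by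
  have h := integral_comp_linearIsometryEquiv_sub R c G
  simp only [hG, integral_neg] at h
  have h2 : (2 : ℝ) • ∫ v, G v = 0 := by
    rw [two_smul]; nth_rewrite 1 [← h]; exact neg_add_cancel _
  exact (smul_eq_zero.mp h2).resolve_left two_ne_zero

end AntisymmetricIntegral

section ReflectedPhase

variable {E : Type*} [NormedAddCommGroup E] [InnerProductSpace ℝ E]

noncomputable def reflectedPhase (R : E → E) (c z v : E) : ℂ :=
  exp (I * (⟪z, R v⟫ : ℝ)) * (exp (I * (⟪z, c + v - R v⟫ : ℝ)) - 1) -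
    I * (⟪z, c + v - R v⟫ : ℝ)

theorem exp_mul_exp_sub_one_sub_neg (α β : ℝ) :
    exp (I * (α + β : ℝ)) * (exp (I * (-β : ℝ)) - 1) - I * (-β : ℝ) =
      -(exp (I * α) * (exp (I * β) - 1) - I * β) := by
  have h₁ : exp (I * (α + β : ℝ)) = exp (I * α) * exp (I * β) := by
    rw [← exp_add]; push_cast; ring_nf
  have h₂ : exp (I * β) * exp (I * (-β : ℝ)) = 1 := by
    rw [← exp_add]; push_cast; simp
  linear_combination (norm := (push_cast; ring)) (exp (I * (-β : ℝ)) - 1) * h₁ + exp (I * α) * h₂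

theorem reflectedPhase_comp_sub {R : E ≃ₗᵢ[ℝ] E} {c : E} (hR : ∀ v, R (R v) = v)
    (hRc : R c = -c) (z v : E) :
    reflectedPhase R c z (R v - c) = -reflectedPhase R c z v := by
  have hRT : R (R v - c) = v + c := by rw [map_sub, hR, hRc, sub_neg_eq_add]
  have hα : ⟪z, R (R v - c)⟫ = ⟪z, R v⟫ + ⟪z, c + v - R v⟫ := by
    rw [hRT, ← inner_add_right]; congr 1; abel
  have hβ : ⟪z, c + (R v - c) - R (R v - c)⟫ = -⟪z, c + v - R v⟫ := by
    rw [hRT, ← inner_neg_right]; congr 1; abel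
  rw [reflectedPhase, hα, hβ]
  exact exp_mul_exp_sub_one_sub_neg _ _

theorem min_comp_sub_add_comm {R : E ≃ₗᵢ[ℝ] E} {c : E} (hRc : R c = -c) {g : E → ℝ}
    (hg : ∀ v, g (R v) = g v) (v : E) :
    min (g (R v - c)) (g (R v - c + c)) = min (g v) (g (v + c)) := by
  have hT : R v - c = R (v + c) := by rw [map_add, hRc, sub_eq_add_neg]
  rw [sub_add_cancel, hT, hg, hg, min_comm]

end ReflectedPhase

theorem reflection_eq_reflectC {d : ℕ} (c : EuclideanSpace ℝ (Fin d)) :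
    ⇑(Submodule.reflection (ℝ ∙ c)ᗮ) = reflectC c := by
  funext v
  rw [Submodule.reflection_apply, reflectC, Submodule.starProjection_orthogonal_val,
    Submodule.starProjection_singleton, two_smul]
  norm_num [RCLike.ofReal_real_eq_id]
  module

theorem reflected_char_integral_zero_general {d : ℕ} (q : EuclideanSpace ℝ (Fin d) → ℝ)
    (hq0 : ∀ v, 0 ≤ q v)
    (hrot : ∀ A : EuclideanSpace ℝ (Fin d) ≃ₗᵢ[ℝ] EuclideanSpace ℝ (Fin d),
      ∀ v, q (A v) = q v)
    (c : EuclideanSpace ℝ (Fin d))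
    (z : EuclideanSpace ℝ (Fin d)) (m : ℝ) :
    ∫ v in {v | ‖v‖ ≤ m},
        (Complex.exp (Complex.I * (⟪z, reflectC c v⟫ : ℝ)) *
          (Complex.exp (Complex.I * (⟪z, c + v - reflectC c v⟫ : ℝ)) - 1) -
          Complex.I * (⟪z, c + v - reflectC c v⟫ : ℝ)) *
        ((min (q v) (if ‖v + c‖ ≤ m then q (v + c) else 0) : ℝ) : ℂ) = 0 := by
  set R := Submodule.reflection (ℝ ∙ c)ᗮ
  set g : EuclideanSpace ℝ (Fin d) → ℝ := fun v => if ‖v‖ ≤ m then q v else 0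
  have hg : ∀ v, g (R v) = g v := fun v => by simp only [g, R.norm_map, hrot]
  have hg0 : ∀ v, 0 ≤ g v := fun v => by
    simp only [g]; split_ifs
    exacts [hq0 v, le_rfl]
  have hball : MeasurableSet {v : EuclideanSpace ℝ (Fin d) | ‖v‖ ≤ m} :=
    measurableSet_le measurable_norm measurable_const
  rw [← reflection_eq_reflectC]
  calc _ = ∫ v in {v | ‖v‖ ≤ m}, reflectedPhase R c z v * (min (g v) (g (v + c)) : ℝ) :=
        setIntegral_congr_fun hball fun v (hv : ‖v‖ ≤ m) => by simp only [g, if_pos hv]; rfl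
    _ = ∫ v, reflectedPhase R c z v * (min (g v) (g (v + c)) : ℝ) := by
        refine setIntegral_eq_integral_of_forall_compl_eq_zero fun v (hv : ¬‖v‖ ≤ m) => ?_
        have hmin : min (g v) (g (v + c)) = 0 := by
          rw [show g v = 0 from if_neg hv]
          exact min_eq_left (hg0 _)
        simp [hmin]
    _ = 0 := integral_eq_zero_of_comp_linearIsometryEquiv_sub_eq_neg R c fun v => by
        rw [min_comp_sub_add_comm
            (Submodule.reflection_orthogonalComplement_singleton_eq_neg c) hg,
          reflectedPhase_comp_sub (Submodule.reflection_reflection _)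
            (Submodule.reflection_orthogonalComplement_singleton_eq_neg c), neg_mul]

/-- For a rotationally invariant density `q` and the reflection `R = I - 2cc^T/|c|²`,
the integral
`∫_{|v|≤m} (e^{i⟨z,Rv⟩}(e^{i⟨z,c+v-Rv⟩} - 1) - i⟨z,c+v-Rv⟩)(q(v) ∧ q(v+c)𝟙_{|v+c|≤m}) dv`
vanishes, provided the integrand is integrable. -/
theorem reflected_char_integral_zero {d : ℕ} (q : EuclideanSpace ℝ (Fin d) → ℝ)
    (hq0 : ∀ v, 0 ≤ q v)
    (hrot : ∀ A : EuclideanSpace ℝ (Fin d) ≃ₗᵢ[ℝ] EuclideanSpace ℝ (Fin d),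
      ∀ v, q (A v) = q v)
    (c : EuclideanSpace ℝ (Fin d)) (hc : c ≠ 0)
    (z : EuclideanSpace ℝ (Fin d)) (m : ℝ) (hm : 0 < m)
    (hint : IntegrableOn
      (fun v => (Complex.exp (Complex.I * (⟪z, reflectC c v⟫ : ℝ)) *
          (Complex.exp (Complex.I * (⟪z, c + v - reflectC c v⟫ : ℝ)) - 1) -
          Complex.I * (⟪z, c + v - reflectC c v⟫ : ℝ)) *
        ((min (q v) (if ‖v + c‖ ≤ m then q (v + c) else 0) : ℝ) : ℂ))
      {v | ‖v‖ ≤ m} MeasureTheory.volume) :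
    ∫ v in {v | ‖v‖ ≤ m},
        (Complex.exp (Complex.I * (⟪z, reflectC c v⟫ : ℝ)) *
          (Complex.exp (Complex.I * (⟪z, c + v - reflectC c v⟫ : ℝ)) - 1) -
          Complex.I * (⟪z, c + v - reflectC c v⟫ : ℝ)) *
        ((min (q v) (if ‖v + c‖ ≤ m then q (v + c) else 0) : ℝ) : ℂ) = 0 :=
  reflected_char_integral_zero_general q hq0 hrot c z m
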